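/- Let n ≥ 1, d ≥ 2. Let 𝒜 and ℬ be disjoint finite sets of multi-indices of degree d−1 in n variables, let c_a > 0 for each a ∈ 𝒜 ∪ ℬ, and let q = Σ_{a∈𝒜} c_a x^a − Σ_{b∈ℬ} c_b x^b ∈ ℝ[x₁,…,xₙ]. Let I_f, I_g, and I_{f⊕g} be the monomial ideals generated by {x^a : a ∈ 𝒜}, {x^b : b ∈ ℬ}, and {x^a : a ∈ 𝒜 ∪ ℬ} respectively. Then ρ(s·q) ≥ (H_{I_{f⊕g}}(d) − H_{I_f}(d)) + (H_{I_{f⊕g}}(d) − H_{I_g}(d)). -/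

import Mathlib

open MvPolynomial

/-- The degree-`ℓ` homogeneous component of an ideal `I`, as a subspace. -/
noncomputable def idealDegComp {n : ℕ} (I : Ideal (MvPolynomial (Fin n) ℝ)) (ℓ : ℕ) :
    Submodule ℝ (MvPolynomial (Fin n) ℝ) where
  carrier := {p | p ∈ I ∧ p.IsHomogeneous ℓ}
  add_mem' := fun ha hb => ⟨I.add_mem ha.1 hb.1, ha.2.add hb.2⟩
  zero_mem' := ⟨I.zero_mem, MvPolynomial.isHomogeneous_zero _ _ _⟩
  smul_mem' := fun c p hp =>
    ⟨by simpa [MvPolynomial.smul_eq_C_mul] using I.mul_mem_left (MvPolynomial.C c) hp.1,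
     by simpa [MvPolynomial.smul_eq_C_mul] using hp.2.C_mul c⟩

/-- The Hilbert function `H_I(ℓ) = dim_ℝ I_ℓ`. -/
noncomputable def hilbertI {n : ℕ} (I : Ideal (MvPolynomial (Fin n) ℝ)) (ℓ : ℕ) : ℕ :=
  Module.finrank ℝ (idealDegComp I ℓ)

/-!
In each degree a monomial ideal is spanned by the monomials it contains, so `H_{I_S}(d)` is the
number of exponents of degree `d` lying above some element of `S`, and the left-hand side counts
the exponents `m` of degree `d` lying above an element of exactly one of `𝒜`, `ℬ`. Say `m` lies
above `b ∈ ℬ` but above no element of `𝒜`. The coefficient of `x^m` in `s·q` is the sum of the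
coefficients of `q` at the exponents `m - eᵢ`; none of these is in `𝒜`, so every term is `≤ 0`,
and since `deg b = deg m - 1`, `b` is one of them and contributes `-c_b < 0`. Hence `x^m` survives
in `s·q`, and symmetrically for `𝒜`.
-/

theorem Set.ncard_symmDiff_eq_sub_add_sub {α : Type*} {s t : Set α} (hs : s.Finite)
    (ht : t.Finite) :
    (symmDiff s t).ncard = ((s ∪ t).ncard - s.ncard) + ((s ∪ t).ncard - t.ncard) := by
  rw [← ncard_sdiff subset_union_left hs, ← ncard_sdiff subset_union_right ht, union_sdiff_left,
    union_sdiff_right, ← ncard_union_eq disjoint_sdiff_sdiff ht.sdiff hs.sdiff, symmDiff_comm,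
    Set.symmDiff_def]

namespace Finsupp

variable {σ : Type*}

theorem exists_eq_add_single_of_le_of_degree_add_one {b m : σ →₀ ℕ} (hbm : b ≤ m)
    (hdeg : b.degree + 1 = m.degree) : ∃ i, m = b + single i 1 := by
  obtain ⟨t, rfl⟩ := le_iff_exists_add.mp hbm
  have ht : t.degree = 1 := by simpa [map_add] using hdeg.symm
  obtain ⟨i, rfl⟩ : t ∈ Set.range fun i => single i 1 := range_single_one ▸ ht
  exact ⟨i, rfl⟩

def multiplesOfDegree (S : Set (σ →₀ ℕ)) (ℓ : ℕ) : Set (σ →₀ ℕ) :=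
  {m | m.degree = ℓ ∧ ∃ a ∈ S, a ≤ m}

theorem multiplesOfDegree_finite [Finite σ] (S : Set (σ →₀ ℕ)) (ℓ : ℕ) :
    (multiplesOfDegree S ℓ).Finite :=
  (finite_of_degree_eq ℓ).subset fun _ hm => hm.1

theorem multiplesOfDegree_union (S T : Set (σ →₀ ℕ)) (ℓ : ℕ) :
    multiplesOfDegree (S ∪ T) ℓ = multiplesOfDegree S ℓ ∪ multiplesOfDegree T ℓ := by
  ext m
  simp only [multiplesOfDegree, Set.mem_union, Set.mem_ofPred_eq, or_and_right, exists_or,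
    and_or_left]

end Finsupp

open Finsupp

namespace MvPolynomial

variable {σ R : Type*} [Fintype σ] [CommRing R] [PartialOrder R] [IsOrderedRing R]

theorem coeff_sum_X_mul_neg {p : MvPolynomial σ R} {b m : σ →₀ ℕ}
    (hp : ∀ x ≤ m, coeff x p ≤ 0) (hbm : b ≤ m) (hdeg : b.degree + 1 = m.degree)
    (hb : coeff b p < 0) :
    coeff m ((∑ i, X i) * p) < 0 := by
  classical
  obtain ⟨i, rfl⟩ := exists_eq_add_single_of_le_of_degree_add_one hbm hdeg
  simp only [Finset.sum_mul, coeff_sum, coeff_X_mul']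
  refine Finset.sum_neg' (fun j _ => ?_) ⟨i, Finset.mem_univ i, ?_⟩
  · split_ifs
    exacts [hp _ tsub_le_self, le_rfl]
  · simpa using hb

theorem coeff_sum_X_mul_sum_monomial_sub_neg {A B : Finset (σ →₀ ℕ)} {c : (σ →₀ ℕ) → R}
    (hc : ∀ b ∈ B, 0 < c b) {ℓ : ℕ} (hB : ∀ b ∈ B, b.degree + 1 = ℓ) {m : σ →₀ ℕ}
    (hmB : m ∈ multiplesOfDegree B ℓ) (hmA : m ∉ multiplesOfDegree A ℓ) :
    coeff m ((∑ i, X i) * (∑ a ∈ A, monomial a (c a) - ∑ b ∈ B, monomial b (c b))) < 0 := by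
  classical
  obtain ⟨hm, b, hb, hbm⟩ := hmB
  rw [Finset.mem_coe] at hb
  have hA : ∀ x ≤ m, x ∉ A := fun x hxm hx => hmA ⟨hm, x, hx, hxm⟩
  have hcoeff : ∀ x ≤ m, coeff x (∑ a ∈ A, monomial a (c a) - ∑ b ∈ B, monomial b (c b))
      = -if x ∈ B then c x else 0 := by
    intro x hxm
    simp [coeff_sum, coeff_monomial, hA x hxm]
  refine coeff_sum_X_mul_neg (fun x hxm => ?_) hbm (by rw [hB b hb, hm]) ?_
  · rw [hcoeff x hxm, neg_nonpos]
    split_ifs with hx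
    exacts [(hc x hx).le, le_rfl]
  · rw [hcoeff b hbm, if_pos hb, neg_neg_iff_pos]
    exact hc b hb

end MvPolynomial

theorem mem_idealDegComp {n : ℕ} {I : Ideal (MvPolynomial (Fin n) ℝ)} {ℓ : ℕ}
    {p : MvPolynomial (Fin n) ℝ} : p ∈ idealDegComp I ℓ ↔ p ∈ I ∧ p.IsHomogeneous ℓ :=
  Iff.rfl

theorem idealDegComp_span_monomial {n : ℕ} (S : Set (Fin n →₀ ℕ)) (ℓ : ℕ) :
    idealDegComp (Ideal.span ((fun a => monomial a (1 : ℝ)) '' S)) ℓ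
      = restrictSupport ℝ (multiplesOfDegree S ℓ) := by
  ext p
  rw [mem_idealDegComp, mem_ideal_span_monomial_image, IsHomogeneous, IsWeightedHomogeneous,
    show (weight 1 : (Fin n →₀ ℕ) →+ ℕ) = degree from degree_eq_weight_one.symm,
    mem_restrictSupport_iff]
  simp only [Set.subset_def, Finset.mem_coe, MvPolynomial.mem_support_iff, multiplesOfDegree,
    Set.mem_ofPred_eq, imp_and, forall_and]
  exact and_comm

theorem hilbertI_span_monomial {n : ℕ} (S : Set (Fin n →₀ ℕ)) (ℓ : ℕ) :
    hilbertI (Ideal.span ((fun a => monomial a (1 : ℝ)) '' S)) ℓ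
      = (multiplesOfDegree S ℓ).ncard := by
  rw [hilbertI, idealDegComp_span_monomial,
    Module.finrank_eq_nat_card_basis (basisRestrictSupport ℝ _), Nat.card_coe_set_eq]

theorem rank_lower_bound_via_hilbert_general
    {n : ℕ} {d : ℕ} (hd : 2 ≤ d)
    (A B : Finset (Fin n →₀ ℕ))
    (hdegA : ∀ a ∈ A, a.degree = d - 1) (hdegB : ∀ b ∈ B, b.degree = d - 1)
    (c : (Fin n →₀ ℕ) → ℝ) (hc : ∀ a ∈ A ∪ B, 0 < c a)
    (q : MvPolynomial (Fin n) ℝ)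
    (hq : q = (∑ a ∈ A, monomial a (c a)) - ∑ b ∈ B, monomial b (c b)) :
    (hilbertI (Ideal.span ((fun a => (monomial a (1 : ℝ))) '' ((A ∪ B : Finset (Fin n →₀ ℕ)) : Set (Fin n →₀ ℕ)))) d
        - hilbertI (Ideal.span ((fun a => (monomial a (1 : ℝ))) '' ((A : Finset (Fin n →₀ ℕ)) : Set (Fin n →₀ ℕ)))) d)
      + (hilbertI (Ideal.span ((fun a => (monomial a (1 : ℝ))) '' ((A ∪ B : Finset (Fin n →₀ ℕ)) : Set (Fin n →₀ ℕ)))) d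
        - hilbertI (Ideal.span ((fun a => (monomial a (1 : ℝ))) '' ((B : Finset (Fin n →₀ ℕ)) : Set (Fin n →₀ ℕ)))) d)
      ≤ ((∑ i, X i) * q).support.card := by
  simp only [hilbertI_span_monomial, Finset.coe_union, multiplesOfDegree_union]
  set DA := multiplesOfDegree (A : Set (Fin n →₀ ℕ)) d
  set DB := multiplesOfDegree (B : Set (Fin n →₀ ℕ)) d
  have hA : ∀ a ∈ A, a.degree + 1 = d := fun a ha => by rw [hdegA a ha]; omega
  have hB : ∀ b ∈ B, b.degree + 1 = d := fun b hb => by rw [hdegB b hb]; omega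
  have hcA : ∀ a ∈ A, 0 < c a := fun a ha => hc a (Finset.mem_union_left B ha)
  have hcB : ∀ b ∈ B, 0 < c b := fun b hb => hc b (Finset.mem_union_right A hb)
  have hnodes : symmDiff DA DB ⊆ ((∑ i, X i) * q).support := by
    rintro m (⟨hmA, hmB⟩ | ⟨hmB, hmA⟩) <;> rw [Finset.mem_coe, MvPolynomial.mem_support_iff, hq]
    · rw [← neg_sub, mul_neg, coeff_neg, neg_ne_zero]
      exact (coeff_sum_X_mul_sum_monomial_sub_neg hcA hA hmA hmB).ne
    · exact (coeff_sum_X_mul_sum_monomial_sub_neg hcB hB hmB hmA).ne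
  calc _ = (symmDiff DA DB).ncard :=
        (Set.ncard_symmDiff_eq_sub_add_sub (multiplesOfDegree_finite _ d)
          (multiplesOfDegree_finite _ d)).symm
    _ ≤ _ := (Set.ncard_le_ncard hnodes).trans_eq (Set.ncard_coe_finset _)

/-- **Proposition 4.6.**  With `q = Σ_{a∈𝒜} c_a x^a − Σ_{b∈ℬ} c_b x^b`
(`𝒜`, `ℬ` disjoint sets of multi-indices of degree `d−1`, all `c_a > 0`) and
monomial ideals `I_f`, `I_g`, `I_{f⊕g}` generated by the monomials with
exponents in `𝒜`, `ℬ`, `𝒜 ∪ ℬ` respectively,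
`ρ(s·q) ≥ (H_{I_{f⊕g}}(d) − H_{I_f}(d)) + (H_{I_{f⊕g}}(d) − H_{I_g}(d))`. -/
theorem rank_lower_bound_via_hilbert
    {n : ℕ} (hn : 1 ≤ n) {d : ℕ} (hd : 2 ≤ d)
    (A B : Finset (Fin n →₀ ℕ)) (hAB : Disjoint A B)
    (hdegA : ∀ a ∈ A, a.degree = d - 1) (hdegB : ∀ b ∈ B, b.degree = d - 1)
    (c : (Fin n →₀ ℕ) → ℝ) (hc : ∀ a ∈ A ∪ B, 0 < c a)
    (q : MvPolynomial (Fin n) ℝ)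
    (hq : q = (∑ a ∈ A, monomial a (c a)) - ∑ b ∈ B, monomial b (c b)) :
    (hilbertI (Ideal.span ((fun a => (monomial a (1 : ℝ))) '' ((A ∪ B : Finset (Fin n →₀ ℕ)) : Set (Fin n →₀ ℕ)))) d
        - hilbertI (Ideal.span ((fun a => (monomial a (1 : ℝ))) '' ((A : Finset (Fin n →₀ ℕ)) : Set (Fin n →₀ ℕ)))) d)
      + (hilbertI (Ideal.span ((fun a => (monomial a (1 : ℝ))) '' ((A ∪ B : Finset (Fin n →₀ ℕ)) : Set (Fin n →₀ ℕ)))) d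
        - hilbertI (Ideal.span ((fun a => (monomial a (1 : ℝ))) '' ((B : Finset (Fin n →₀ ℕ)) : Set (Fin n →₀ ℕ)))) d)
      ≤ ((∑ i, X i) * q).support.card :=
  rank_lower_bound_via_hilbert_general hd A B hdegA hdegB c hc q hq
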